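/- Let {(σ_n, v_n, u_n)}_{n∈ℕ} be a singular system for the compact linear operator K : X → Y such that (u_n) spans the closure of the range of K and (v_n) spans the closure of the range of K*. Let α > 0 and c₂ > 0 satisfy σ_n² ≤ c₂ α for all n. If x = K* K z for some z ∈ X, then the ℓ¹-SVD reconstruction error from exact data satisfies ‖ ∑_n (1/σ_n²) S_α(σ_n ⟨K x, u_n⟩) v_n − x ‖ ≤ c₂ α ‖z‖. -/

import Mathlib

open scoped InnerProductSpace

/-- The soft thresholding function `S_α`. -/
noncomputable def softThresh (α t : ℝ) : ℝ :=
  if t ≤ -(α / 2) then t + α / 2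
  else if α / 2 ≤ t then t - α / 2
  else 0

/-!
In the singular basis the data coefficients of `x = K* K z` are `⟨x, v_n⟩ = σ_n² ⟨z, v_n⟩`, and the
reconstruction replaces `⟨x, v_n⟩` by `σ_n⁻² S_α(σ_n² ⟨x, v_n⟩)`. Soft thresholding moves its
argument by at most its own size, so the `n`-th error coefficient is at most
`|⟨x, v_n⟩| = σ_n² |⟨z, v_n⟩| ≤ c₂ α |⟨z, v_n⟩|`. Since `x` lies in the closed span of the `v_n`,
the error is the series with these coefficients, and Bessel's inequality for `z` bounds its norm
by `c₂ α ‖z‖`.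
-/

open Submodule
open scoped lp

lemma abs_softThresh_sub_le {α : ℝ} (hα : 0 ≤ α) (t : ℝ) : |softThresh α t - t| ≤ |t| := by
  unfold softThresh
  split_ifs <;> rw [abs_le] <;> constructor <;> cases abs_cases t <;> linarith

lemma abs_inv_mul_softThresh_mul_sub_le {α : ℝ} (hα : 0 ≤ α) (s c : ℝ) :
    |s⁻¹ * softThresh α (s * c) - c| ≤ |c| := by
  rcases eq_or_ne s 0 with rfl | hs
  · simp
  calc |s⁻¹ * softThresh α (s * c) - c| = |s|⁻¹ * |softThresh α (s * c) - s * c| := by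
        rw [← abs_inv, ← abs_mul, mul_sub, inv_mul_cancel_left₀ hs]
    _ ≤ |s|⁻¹ * |s * c| :=
        mul_le_mul_of_nonneg_left (abs_softThresh_sub_le hα _) (by positivity)
    _ = |c| := by rw [abs_mul, inv_mul_cancel_left₀ (abs_ne_zero.mpr hs)]

namespace Orthonormal

variable {ι 𝕜 E : Type*} [RCLike 𝕜] [NormedAddCommGroup E] [InnerProductSpace 𝕜 E]
  {v : ι → E}

lemma inner_eq_of_hasSum (hv : Orthonormal 𝕜 v) {f : ι → 𝕜} {x : E}
    (hx : HasSum (fun i => f i • v i) x) (i : ι) : ⟪v i, x⟫_𝕜 = f i := by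
  classical
  refine ((innerSL 𝕜 (v i)).hasSum hx).unique ?_
  convert hasSum_single i fun j (hj : j ≠ i) => ?_ using 1
  · simp [hv.1 i]
  · simp [hv.inner_eq_zero hj.symm]

lemma memℓp_inner (hv : Orthonormal 𝕜 v) (x : E) : Memℓp (fun i => ⟪v i, x⟫_𝕜) 2 :=
  memℓp_gen (by simpa using hv.inner_products_summable (x := x))

lemma norm_lp_inner_le (hv : Orthonormal 𝕜 v) (x : E) :
    ‖(⟨_, hv.memℓp_inner x⟩ : ℓ²(ι, 𝕜))‖ ≤ ‖x‖ :=
  lp.norm_le_of_tsum_le (by norm_num) (norm_nonneg x)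
    (by simpa using hv.tsum_inner_products_le (x := x))

variable [CompleteSpace E]

lemma exists_hasSum_smul_norm_le (hv : Orthonormal 𝕜 v) {b : ι → 𝕜} {C : ℝ} (hC : 0 ≤ C)
    (x : E) (hb : ∀ i, ‖b i‖ ≤ C * ‖⟪v i, x⟫_𝕜‖) :
    ∃ y, HasSum (fun i => b i • v i) y ∧ ‖y‖ ≤ C * ‖x‖ := by
  let w : ℓ²(ι, 𝕜) := ⟨_, hv.memℓp_inner x⟩
  have hbw : ∀ i, ‖b i‖ ≤ ‖((C : 𝕜) • w) i‖ := fun i => by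
    simpa [norm_smul, abs_of_nonneg hC] using hb i
  let g : ℓ²(ι, 𝕜) := ⟨b, (lp.memℓp ((C : 𝕜) • w)).mono' hbw⟩
  refine ⟨hv.orthogonalFamily.linearIsometry g, ?_, ?_⟩
  · simpa using hv.orthogonalFamily.hasSum_linearIsometry g
  calc ‖hv.orthogonalFamily.linearIsometry g‖ = ‖g‖ := LinearIsometry.norm_map _ _
    _ ≤ ‖(C : 𝕜) • w‖ := lp.norm_mono two_ne_zero hbw
    _ = C * ‖w‖ := by rw [norm_smul, RCLike.norm_ofReal, abs_of_nonneg hC]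
    _ ≤ C * ‖x‖ := by gcongr; exact hv.norm_lp_inner_le x

lemma hasSum_inner_smul_of_mem_closure_span (hv : Orthonormal 𝕜 v) {x : E}
    (hx : x ∈ (span 𝕜 (Set.range v)).topologicalClosure) :
    HasSum (fun i => ⟪v i, x⟫_𝕜 • v i) x := by
  have hspan : (⨆ i, LinearMap.range (LinearIsometry.toSpanSingleton 𝕜 E (hv.1 i)).toLinearMap)
      = span 𝕜 (Set.range v) := by
    simp [span_range_eq_iSup, LinearMap.span_singleton_eq_range]
  rw [← hspan, ← hv.orthogonalFamily.range_linearIsometry] at hx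
  obtain ⟨f, rfl⟩ := hx
  rw [LinearIsometry.coe_toLinearMap]
  have hf : HasSum (fun i => f i • v i) (hv.orthogonalFamily.linearIsometry f) := by
    simpa using hv.orthogonalFamily.hasSum_linearIsometry f
  simpa only [hv.inner_eq_of_hasSum hf] using hf

end Orthonormal

section SingularSystem

variable {ι X Y : Type*} [NormedAddCommGroup X] [InnerProductSpace ℝ X] [CompleteSpace X]
  [NormedAddCommGroup Y] [InnerProductSpace ℝ Y] [CompleteSpace Y]
  {K : X →L[ℝ] Y} {σ : ι → ℝ} {v : ι → X} {u : ι → Y}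

lemma inner_apply_eq_mul_inner_of_adjoint_eq_smul (hKadj : ∀ n, K.adjoint (u n) = σ n • v n)
    (w : X) (n : ι) :
    ⟪K w, u n⟫_ℝ = σ n * ⟪v n, w⟫_ℝ := by
  rw [← ContinuousLinearMap.adjoint_inner_right, hKadj, real_inner_smul_right, real_inner_comm]

lemma inner_adjoint_apply_apply_eq_sq_mul_inner (hKv : ∀ n, K (v n) = σ n • u n)
    (hKadj : ∀ n, K.adjoint (u n) = σ n • v n) (w : X) (n : ι) :
    ⟪v n, K.adjoint (K w)⟫_ℝ = σ n ^ 2 * ⟪v n, w⟫_ℝ := by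
  rw [ContinuousLinearMap.adjoint_inner_right, hKv, real_inner_smul_left, real_inner_comm,
    inner_apply_eq_mul_inner_of_adjoint_eq_smul hKadj]
  ring

end SingularSystem

theorem l1SVD_error_estimate_range_adjoint_comp_general {X Y : Type*}
    [NormedAddCommGroup X] [InnerProductSpace ℝ X] [CompleteSpace X]
    [NormedAddCommGroup Y] [InnerProductSpace ℝ Y] [CompleteSpace Y]
    (K : X →L[ℝ] Y)
    (σ : ℕ → ℝ) (v : ℕ → X) (u : ℕ → Y)
    (hv : Orthonormal ℝ v)
    (hKv : ∀ n, K (v n) = σ n • u n)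
    (hKadj : ∀ n, (ContinuousLinearMap.adjoint K) (u n) = σ n • v n)
    (hvspan : (Submodule.span ℝ (Set.range v)).topologicalClosure
      = (LinearMap.range ((ContinuousLinearMap.adjoint K : Y →L[ℝ] X) : Y →ₗ[ℝ] X)).topologicalClosure)
    (α : ℝ) (hα : 0 < α) (c₂ : ℝ)
    (hσb : ∀ n, σ n ^ 2 ≤ c₂ * α)
    (z : X) (x : X) (hx : x = ContinuousLinearMap.adjoint K (K z)) :
    ‖(∑' n, ((σ n ^ 2)⁻¹ * softThresh α (σ n * ⟪K x, u n⟫_ℝ)) • v n) - x‖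
      ≤ c₂ * α * ‖z‖ := by
  have hx_sum : HasSum (fun n => ⟪v n, x⟫_ℝ • v n) x :=
    hv.hasSum_inner_smul_of_mem_closure_span
      (hvspan ▸ le_topologicalClosure _ ⟨K z, hx.symm⟩)
  have hcoeff : ∀ n, ⟪v n, x⟫_ℝ = σ n ^ 2 * ⟪v n, z⟫_ℝ := fun n => by
    rw [hx, inner_adjoint_apply_apply_eq_sq_mul_inner hKv hKadj]
  have herr : ∀ n, ‖(σ n ^ 2)⁻¹ * softThresh α (σ n * ⟪K x, u n⟫_ℝ) - ⟪v n, x⟫_ℝ‖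
      ≤ c₂ * α * ‖⟪v n, z⟫_ℝ‖ := fun n => calc
    _ = |(σ n ^ 2)⁻¹ * softThresh α (σ n ^ 2 * ⟪v n, x⟫_ℝ) - ⟪v n, x⟫_ℝ| := by
      rw [inner_apply_eq_mul_inner_of_adjoint_eq_smul hKadj, ← mul_assoc, ← sq,
        Real.norm_eq_abs]
    _ ≤ |⟪v n, x⟫_ℝ| := abs_inv_mul_softThresh_mul_sub_le hα.le _ _
    _ = σ n ^ 2 * ‖⟪v n, z⟫_ℝ‖ := by rw [hcoeff, abs_mul, abs_sq, Real.norm_eq_abs]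
    _ ≤ c₂ * α * ‖⟪v n, z⟫_ℝ‖ := by gcongr; exact hσb n
  obtain ⟨y, hy, hy_le⟩ :=
    hv.exists_hasSum_smul_norm_le ((sq_nonneg _).trans (hσb 0)) z herr
  have hsum :
      HasSum (fun n => ((σ n ^ 2)⁻¹ * softThresh α (σ n * ⟪K x, u n⟫_ℝ)) • v n) (y + x) := by
    simpa [sub_smul] using hy.add hx_sum
  rwa [hsum.tsum_eq, add_sub_cancel_right]

/-- If `σ_n² ≤ c₂ α` for all `n` and `x = K* K z`, then the `ℓ¹`-SVD reconstruction error
from exact data satisfies `‖∑ (1/σ_n²) S_α(σ_n ⟨K x, u_n⟩) v_n − x‖ ≤ c₂ α ‖z‖`. -/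
theorem l1SVD_error_estimate_range_adjoint_comp {X Y : Type*}
    [NormedAddCommGroup X] [InnerProductSpace ℝ X] [CompleteSpace X]
    [NormedAddCommGroup Y] [InnerProductSpace ℝ Y] [CompleteSpace Y]
    (K : X →L[ℝ] Y) (hK : IsCompactOperator K)
    (σ : ℕ → ℝ) (v : ℕ → X) (u : ℕ → Y)
    (hσ : ∀ n, 0 < σ n) (hv : Orthonormal ℝ v) (hu : Orthonormal ℝ u)
    (hKv : ∀ n, K (v n) = σ n • u n)
    (hKadj : ∀ n, (ContinuousLinearMap.adjoint K) (u n) = σ n • v n)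
    (huspan : (Submodule.span ℝ (Set.range u)).topologicalClosure
      = (LinearMap.range (K : X →ₗ[ℝ] Y)).topologicalClosure)
    (hvspan : (Submodule.span ℝ (Set.range v)).topologicalClosure
      = (LinearMap.range ((ContinuousLinearMap.adjoint K : Y →L[ℝ] X) : Y →ₗ[ℝ] X)).topologicalClosure)
    (α : ℝ) (hα : 0 < α) (c₂ : ℝ) (hc₂ : 0 < c₂)
    (hσb : ∀ n, σ n ^ 2 ≤ c₂ * α)
    (z : X) (x : X) (hx : x = ContinuousLinearMap.adjoint K (K z)) :
    ‖(∑' n, ((σ n ^ 2)⁻¹ * softThresh α (σ n * ⟪K x, u n⟫_ℝ)) • v n) - x‖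
      ≤ c₂ * α * ‖z‖ :=
  l1SVD_error_estimate_range_adjoint_comp_general K σ v u hv hKv hKadj hvspan α hα c₂ hσb z x hx
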